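/- Let z denote the element of the plactic monoid M represented by the word cba. Then z lies in the center of M (z * w = w * z for every w ∈ M), and moreover the center of M equals the submonoid generated by z: Submonoid.center M = Submonoid.closure {z}. -/

import Mathlib

namespace Plactic

/-- The generator `a`. -/
def a : FreeMonoid (Fin 3) := FreeMonoid.of 0
/-- The generator `b`. -/
def b : FreeMonoid (Fin 3) := FreeMonoid.of 1
/-- The generator `c`. -/
def c : FreeMonoid (Fin 3) := FreeMonoid.of 2

/-- The eight Knuth relations on three generators. -/
inductive KnuthRel : FreeMonoid (Fin 3) → FreeMonoid (Fin 3) → Prop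
  | aba : KnuthRel (a * b * a) (b * a * a)
  | bab : KnuthRel (b * a * b) (b * b * a)
  | aca : KnuthRel (a * c * a) (c * a * a)
  | cac : KnuthRel (c * a * c) (c * c * a)
  | cbb : KnuthRel (c * b * b) (b * c * b)
  | cbc : KnuthRel (c * b * c) (c * c * b)
  | bac : KnuthRel (b * a * c) (b * c * a)
  | acb : KnuthRel (a * c * b) (c * a * b)

/-- The plactic congruence: the congruence generated by the Knuth relations. -/
def placticCon : Con (FreeMonoid (Fin 3)) := conGen KnuthRel

/-- The plactic monoid with three generators. -/
abbrev M := placticCon.Quotient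

/-- The natural projection from the free monoid onto the plactic monoid. -/
def mk : FreeMonoid (Fin 3) →* M := placticCon.mk'

/-- The congruence on `M` generated by the pair `(ac, ca)`. -/
def con1 : Con M := conGen (fun x y => x = mk (a * c) ∧ y = mk (c * a))

/-- `N1 = M/(ac = ca)`. -/
abbrev N1 := con1.Quotient

/-- The congruence on `M` generated by the pair `(bacb, cbab)`. -/
def con2 : Con M := conGen (fun x y => x = mk (b * a * c * b) ∧ y = mk (c * b * a * b))

/-- The grammic monoid `N2 = M/(bacb = cbab)`. -/
abbrev N2 := con2.Quotient

/-!
Row insertion into tableaux over `a < b < c` respects the Knuth relations, and every word is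
equivalent to the reading word of its insertion tableau, so the insertion tableau is a complete
invariant of `M`. Centrality of `cba` is then a finite check on the three letters. Conversely, if
`w` is central then `w x` and `x w` have the same insertion tableau for each letter `x`; inserting
the powers `a^n`, `b^n`, `c^n` in closed form, these three equations force the tableau of `w` to
consist of `p` columns `cba`, whose reading word `c^p b^p a^p` equals `(cba)^p`.
-/

/-- The tableau with rows `a^s b^t c^u`, `b^q c^r`, `c^p`, from bottom to top. -/
structure Tableau where
  p : ℕ
  q : ℕ
  r : ℕ
  s : ℕ
  t : ℕ
  u : ℕ
deriving DecidableEq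

def rowInsert : Fin 3 → Tableau → Tableau
  | 0, ⟨p, q, r, s, t, u⟩ =>
    match t, r, u with
    | t+1, r+1, u => ⟨p+1, q+1, r, s+1, t, u⟩
    | t+1, 0, u => ⟨p, q+1, 0, s+1, t, u⟩
    | 0, r, u+1 => ⟨p, q, r+1, s+1, 0, u⟩
    | 0, r, 0 => ⟨p, q, r, s+1, 0, 0⟩
  | 1, ⟨p, q, r, s, t, u⟩ =>
    match u with
    | u+1 => ⟨p, q, r+1, s, t+1, u⟩
    | 0 => ⟨p, q, r, s, t+1, 0⟩
  | 2, ⟨p, q, r, s, t, u⟩ => ⟨p, q, r, s, t, u+1⟩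

def insertWord (w : FreeMonoid (Fin 3)) (T : Tableau) : Tableau :=
  w.toList.foldl (fun T x => rowInsert x T) T

lemma insertWord_one (T : Tableau) : insertWord 1 T = T := rfl

lemma insertWord_of (x : Fin 3) (T : Tableau) :
    insertWord (FreeMonoid.of x) T = rowInsert x T := rfl

lemma insertWord_mul (v w : FreeMonoid (Fin 3)) (T : Tableau) :
    insertWord (v * w) T = insertWord w (insertWord v T) := by
  simp [insertWord, List.foldl_append]

lemma insertWord_eq_of_knuthRel {x y : FreeMonoid (Fin 3)} (h : KnuthRel x y) (T : Tableau) :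
    insertWord x T = insertWord y T := by
  obtain ⟨p, q, r, s, t, u⟩ := T
  cases h <;> simp only [a, b, c, insertWord_mul, insertWord_of] <;>
    obtain _ | _ | t := t <;> obtain _ | _ | u := u <;> obtain _ | _ | r := r <;> rfl

def insertCon : Con (FreeMonoid (Fin 3)) where
  r x y := ∀ T, insertWord x T = insertWord y T
  iseqv := ⟨fun _ _ => rfl, fun h T => (h T).symm, fun h₁ h₂ T => (h₁ T).trans (h₂ T)⟩
  mul' {w x y z} h₁ h₂ T := by rw [insertWord_mul, insertWord_mul, h₁, h₂]

lemma insertWord_eq_of_mk_eq {x y : FreeMonoid (Fin 3)} (h : mk x = mk y) (T : Tableau) :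
    insertWord x T = insertWord y T :=
  (Con.conGen_le.mpr fun _ _ => insertWord_eq_of_knuthRel : placticCon ≤ insertCon)
    (placticCon.eq.mp h) T

lemma mk_eq_of_knuthRel {x y : FreeMonoid (Fin 3)} (h : KnuthRel x y) : mk x = mk y :=
  placticCon.eq.mpr (ConGen.Rel.of _ _ h)

lemma mul_mul_mul_eq_of_eq {S : Type*} [Semigroup S] {x₁ x₂ x₃ y₁ y₂ y₃ : S}
    (h : x₁ * x₂ * x₃ = y₁ * y₂ * y₃) (w : S) :
    x₁ * (x₂ * (x₃ * w)) = y₁ * (y₂ * (y₃ * w)) := by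
  rw [← mul_assoc, ← mul_assoc, h, mul_assoc, mul_assoc]

local notation "A" => mk a
local notation "B" => mk b
local notation "C" => mk c

section KnuthRelations

variable (w : M)

lemma knuth_aba : A * (B * (A * w)) = B * (A * (A * w)) :=
  mul_mul_mul_eq_of_eq (by simpa using mk_eq_of_knuthRel .aba) w

lemma knuth_bab : B * (A * (B * w)) = B * (B * (A * w)) :=
  mul_mul_mul_eq_of_eq (by simpa using mk_eq_of_knuthRel .bab) w

lemma knuth_aca : A * (C * (A * w)) = C * (A * (A * w)) :=
  mul_mul_mul_eq_of_eq (by simpa using mk_eq_of_knuthRel .aca) w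

lemma knuth_cac : C * (A * (C * w)) = C * (C * (A * w)) :=
  mul_mul_mul_eq_of_eq (by simpa using mk_eq_of_knuthRel .cac) w

lemma knuth_cbb : C * (B * (B * w)) = B * (C * (B * w)) :=
  mul_mul_mul_eq_of_eq (by simpa using mk_eq_of_knuthRel .cbb) w

lemma knuth_cbc : C * (B * (C * w)) = C * (C * (B * w)) :=
  mul_mul_mul_eq_of_eq (by simpa using mk_eq_of_knuthRel .cbc) w

lemma knuth_bac : B * (A * (C * w)) = B * (C * (A * w)) :=
  mul_mul_mul_eq_of_eq (by simpa using mk_eq_of_knuthRel .bac) w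

lemma knuth_acb : A * (C * (B * w)) = C * (A * (B * w)) :=
  mul_mul_mul_eq_of_eq (by simpa using mk_eq_of_knuthRel .acb) w

end KnuthRelations

section Powers

lemma pow_succ_mul_assoc' {S : Type*} [Monoid S] (x : S) (n : ℕ) (w : S) :
    x ^ (n + 1) * w = x * (x ^ n * w) := by
  rw [pow_succ', mul_assoc]

lemma pow_succ_mul_assoc {S : Type*} [Monoid S] (x : S) (n : ℕ) (w : S) :
    x ^ (n + 1) * w = x ^ n * (x * w) := by
  rw [pow_succ, mul_assoc]

variable (n : ℕ) (w : M)

lemma c_pow_succ_b : C ^ (n + 1) * (B * w) = C * (B * (C ^ n * w)) := by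
  induction n generalizing w with
  | zero => simp
  | succ n ih => rw [pow_succ_mul_assoc', ih, ← knuth_cbc, ← pow_succ_mul_assoc']

lemma c_pow_succ_a : C ^ (n + 1) * (A * w) = C * (A * (C ^ n * w)) := by
  induction n generalizing w with
  | zero => simp
  | succ n ih => rw [pow_succ_mul_assoc', ih, ← knuth_cac, ← pow_succ_mul_assoc']

lemma b_pow_succ_a : B ^ (n + 1) * (A * w) = B * (A * (B ^ n * w)) := by
  induction n generalizing w with
  | zero => simp
  | succ n ih => rw [pow_succ_mul_assoc', ih, ← knuth_bab, ← pow_succ_mul_assoc']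

lemma b_pow_succ_ca : B ^ (n + 1) * (C * (A * w)) = B ^ (n + 1) * (A * (C * w)) := by
  induction n generalizing w with
  | zero => simpa using (knuth_bac w).symm
  | succ n ih => rw [pow_succ_mul_assoc', ih, ← pow_succ_mul_assoc']

lemma b_pow_cb : B ^ n * (C * (B * w)) = C * (B ^ (n + 1) * w) := by
  induction n generalizing w with
  | zero => simp
  | succ n ih =>
    rw [pow_succ_mul_assoc', ih, pow_succ_mul_assoc' B n w, ← knuth_cbb,
      ← pow_succ_mul_assoc' B n, ← pow_succ_mul_assoc' B (n + 1)]

lemma a_pow_ca : A ^ n * (C * (A * w)) = C * (A ^ (n + 1) * w) := by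
  induction n generalizing w with
  | zero => simp
  | succ n ih =>
    rw [pow_succ_mul_assoc', ih, pow_succ_mul_assoc' A n w, knuth_aca,
      ← pow_succ_mul_assoc' A n, ← pow_succ_mul_assoc' A (n + 1)]

lemma a_pow_ba : A ^ n * (B * (A * w)) = B * (A ^ (n + 1) * w) := by
  induction n generalizing w with
  | zero => simp
  | succ n ih =>
    rw [pow_succ_mul_assoc', ih, pow_succ_mul_assoc' A n w, knuth_aba,
      ← pow_succ_mul_assoc' A n, ← pow_succ_mul_assoc' A (n + 1)]

lemma a_pow_cb : A ^ n * (C * (B * w)) = C * (A ^ n * (B * w)) := by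
  cases n with
  | zero => simp
  | succ n => rw [pow_succ_mul_assoc, knuth_acb, a_pow_ca]

end Powers

def readingWord (T : Tableau) : FreeMonoid (Fin 3) :=
  c ^ T.p * (b ^ T.q * (c ^ T.r * (a ^ T.s * (b ^ T.t * c ^ T.u))))

lemma a_pow_b_pow_succ_c_pow_a (s t u : ℕ) (w : M) :
    A ^ s * (B ^ (t + 1) * (C ^ u * (A * w))) = B * (A ^ (s + 1) * (B ^ t * (C ^ u * w))) := by
  cases u with
  | zero => simp only [pow_zero, one_mul]; rw [b_pow_succ_a, a_pow_ba]
  | succ u =>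
    rw [c_pow_succ_a, b_pow_succ_ca, ← pow_succ_mul_assoc', b_pow_succ_a, a_pow_ba]

lemma mk_readingWord_mul_of_mul (x : Fin 3) (T : Tableau) (w : M) :
    mk (readingWord T) * (mk (FreeMonoid.of x) * w) = mk (readingWord (rowInsert x T)) * w := by
  obtain ⟨p, q, r, s, t, u⟩ := T
  fin_cases x
  · change _ * (A * w) = _
    rcases t with _ | t <;> [rcases u with _ | u; rcases r with _ | r] <;>
      simp only [readingWord, rowInsert, map_mul, map_pow, map_one, pow_zero, one_mul, mul_assoc]
    · rw [← pow_succ_mul_assoc]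
    · rw [c_pow_succ_a, a_pow_ca, ← pow_succ_mul_assoc]
    · rw [a_pow_b_pow_succ_c_pow_a, ← pow_succ_mul_assoc]
    · rw [a_pow_b_pow_succ_c_pow_a, c_pow_succ_b, b_pow_cb, ← pow_succ_mul_assoc]
  · change _ * (B * w) = _
    rcases u with _ | u <;>
      simp only [readingWord, rowInsert, map_mul, map_pow, map_one, pow_zero, one_mul, mul_assoc]
    · rw [← pow_succ_mul_assoc]
    · rw [c_pow_succ_b, b_pow_cb, pow_succ_mul_assoc' B t, a_pow_cb,
        ← pow_succ_mul_assoc' B t, ← pow_succ_mul_assoc]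
  · change _ * (C * w) = _
    simp only [readingWord, rowInsert, map_mul, map_pow, mul_assoc]
    rw [← pow_succ_mul_assoc]

lemma mk_readingWord_insertWord (v : FreeMonoid (Fin 3)) (T : Tableau) (w : M) :
    mk (readingWord (insertWord v T)) * w = mk (readingWord T) * (mk v * w) := by
  induction v using FreeMonoid.inductionOn' generalizing T with
  | one => simp [insertWord_one]
  | of_mul x v ih =>
    rw [insertWord_mul, insertWord_of, ih, ← mk_readingWord_mul_of_mul, map_mul, mul_assoc]

def emptyTableau : Tableau := ⟨0, 0, 0, 0, 0, 0⟩

def insertionTableau (w : FreeMonoid (Fin 3)) : Tableau := insertWord w emptyTableau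

lemma mk_readingWord_insertionTableau (w : FreeMonoid (Fin 3)) :
    mk (readingWord (insertionTableau w)) = mk w := by
  have h := mk_readingWord_insertWord w emptyTableau 1
  rwa [show readingWord emptyTableau = 1 by simp [readingWord, emptyTableau], map_one, one_mul,
    mul_one, mul_one] at h

lemma mk_eq_mk_iff {x y : FreeMonoid (Fin 3)} :
    mk x = mk y ↔ insertionTableau x = insertionTableau y := by
  refine ⟨fun h => insertWord_eq_of_mk_eq h _, fun h => ?_⟩
  rw [← mk_readingWord_insertionTableau x, ← mk_readingWord_insertionTableau y, h]

lemma commute_z_of (x : Fin 3) : Commute (mk (c * b * a)) (mk (FreeMonoid.of x)) := by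
  rw [Commute, SemiconjBy, ← map_mul, ← map_mul, mk_eq_mk_iff]
  fin_cases x <;> decide

lemma commute_z (w : M) : Commute (mk (c * b * a)) w := by
  obtain ⟨v, rfl⟩ := placticCon.mk'_surjective w
  induction v using FreeMonoid.inductionOn' with
  | one => exact Commute.one_right _
  | of_mul x v ih => rw [map_mul]; exact (commute_z_of x).mul_right ih

lemma insertWord_c_pow (n : ℕ) (T : Tableau) :
    insertWord (c ^ n) T = ⟨T.p, T.q, T.r, T.s, T.t, T.u + n⟩ := by
  induction n with
  | zero => rfl
  | succ n ih => rw [pow_succ, insertWord_mul, ih]; rfl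

lemma insertWord_b_pow (n : ℕ) (T : Tableau) :
    insertWord (b ^ n) T = ⟨T.p, T.q, T.r + min n T.u, T.s, T.t + n, T.u - n⟩ := by
  induction n generalizing T with
  | zero => simp [insertWord_one]
  | succ n ih =>
    rw [pow_succ', insertWord_mul, ih]
    obtain ⟨p, q, r, s, t, _ | u⟩ := T <;>
      simp only [b, insertWord_of, rowInsert, Tableau.mk.injEq, true_and] <;> omega

lemma insertWord_a_pow (n : ℕ) (T : Tableau) :
    insertWord (a ^ n) T = ⟨T.p + min (min n T.t) T.r, T.q + min n T.t,
      T.r - min n T.t + min (n - T.t) T.u, T.s + n, T.t - n, T.u - (n - T.t)⟩ := by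
  induction n generalizing T with
  | zero => simp [insertWord_one]
  | succ n ih =>
    rw [pow_succ', insertWord_mul, ih]
    obtain ⟨p, q, _ | r, s, _ | t, _ | u⟩ := T <;>
      simp only [a, insertWord_of, rowInsert, Tableau.mk.injEq] <;> omega

def column (k : ℕ) : Tableau := ⟨k, k, 0, k, 0, 0⟩

lemma mk_readingWord_column (k : ℕ) : mk (readingWord (column k)) = mk (c * b * a) ^ k := by
  induction k with
  | zero => simp [readingWord, column]
  | succ k ih =>
    have h := mk_readingWord_insertWord (c * b * a) (column k) 1
    rwa [mul_one, mul_one, ih, ← pow_succ] at h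

lemma eq_column_of_rowInsert_eq {T : Tableau}
    (h : ∀ x, rowInsert x T = insertWord (readingWord T) (rowInsert x emptyTableau)) :
    T = column T.p := by
  obtain ⟨p, q, r, s, t, u⟩ := T
  have h0 := h 0
  have h1 := h 1
  have h2 := h 2
  simp only [readingWord, insertWord_mul, insertWord_a_pow, insertWord_b_pow, insertWord_c_pow,
    emptyTableau, rowInsert] at h0 h1 h2
  rcases t with _ | t <;> rcases u with _ | u <;> rcases r with _ | r <;>
    simp only [Tableau.mk.injEq, column, true_and, and_true] at h0 h1 h2 ⊢ <;> omega

lemma insertionTableau_eq_column_of_mem_center {v : FreeMonoid (Fin 3)}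
    (hv : mk v ∈ Submonoid.center M) :
    insertionTableau v = column (insertionTableau v).p := by
  refine eq_column_of_rowInsert_eq fun x => ?_
  have hvx :
      mk (v * FreeMonoid.of x) = mk (FreeMonoid.of x * readingWord (insertionTableau v)) := by
    rw [map_mul, map_mul, mk_readingWord_insertionTableau]
    exact (Submonoid.mem_center_iff.mp hv _).symm
  simpa only [insertionTableau, insertWord_mul, insertWord_of] using
    insertWord_eq_of_mk_eq hvx emptyTableau

/-- The element `z = cba` lies in the center of the plactic monoid `M`, and the
center of `M` is exactly the submonoid generated by `z`. -/
theorem center_eq_closure_z :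
    (∀ w : M, mk (c * b * a) * w = w * mk (c * b * a)) ∧
    Submonoid.center M = Submonoid.closure {mk (c * b * a)} := by
  refine ⟨fun w => commute_z w, le_antisymm (fun w hw => ?_) ?_⟩
  · obtain ⟨v, rfl⟩ := placticCon.mk'_surjective w
    refine Submonoid.mem_closure_singleton.mpr ⟨(insertionTableau v).p, ?_⟩
    change _ = mk v
    rw [← mk_readingWord_column, ← insertionTableau_eq_column_of_mem_center hw,
      mk_readingWord_insertionTableau]
  · exact (Submonoid.closure_singleton_le_iff_mem _ _).mpr
      (Submonoid.mem_center_iff.mpr fun w => (commute_z w).symm)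

end Plactic
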